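/- Let P : E' → E be a covering projection between path connected topological spaces. If E is locally path connected, separable, and metrizable, then E' is locally path connected, separable, and metrizable. -/

import Mathlib

/-!
A covering map is a separated local homeomorphism. Local path-connectedness pulls back along any
local homeomorphism, the Hausdorff property and regularity along separated ones, so by Urysohn
metrizability of `E'` reduces to second countability. For that, cover `E'` by the sheets over
countably many evenly covered open sets of `E`: each sheet is homeomorphic to an open subset of
`E`, hence second countable, and a point lies in at most one sheet over each of these sets. So a
sheet, being separable, meets only countably many others, and by connectedness of `E'` the
countably many sheets reachable from a fixed one through chains of overlapping sheets cover `E'`.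
-/

universe u

open Set Filter Topology TopologicalSpace

section LocalHomeomorph

variable {X Y : Type*} [TopologicalSpace X] [TopologicalSpace Y] {f : X → Y}

theorem IsLocalHomeomorph.locallyPathConnectedSpace (hf : IsLocalHomeomorph f)
    [LocallyPathConnectedSpace Y] : LocallyPathConnectedSpace X := by
  choose e hxe _ using hf
  refine .of_bases (p := fun x V => V ∈ 𝓝 (e x x) ∧ IsPathConnected V ∧ V ⊆ (e x).target)
    (s := fun x V => (e x).symm '' V) (fun x => ?_) fun x V hV => ?_
  · rw [← (e x).symm_map_nhds_eq (hxe x)]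
    exact (pathConnected_subset_basis (e x).open_target ((e x).map_source (hxe x))).map _
  · exact hV.2.1.image' ((e x).continuousOn_symm.mono hV.2.2)

theorem IsSeparatedMap.t2Space [T2Space Y] (hsep : IsSeparatedMap f) (hf : Continuous f) :
    T2Space X where
  t2 x x' hne := by
    by_cases h : f x = f x'
    · exact hsep x x' h hne
    · obtain ⟨u, v, hu, hv, hxu, hxv, huv⟩ := t2_separation h
      exact ⟨f ⁻¹' u, f ⁻¹' v, hu.preimage hf, hv.preimage hf, hxu, hxv, huv.preimage f⟩

theorem IsLocalHomeomorph.regularSpace (hf : IsLocalHomeomorph f) (hsep : IsSeparatedMap f)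
    [RegularSpace Y] : RegularSpace X := by
  refine .of_exists_mem_nhds_isClosed_subset fun x n hn => ?_
  obtain ⟨e, hxe, rfl⟩ := hf x
  obtain ⟨C, hC, hCc, hCn⟩ := exists_mem_nhds_isClosed_subset
    (e.image_mem_nhds hxe (inter_mem hn (e.open_source.mem_nhds hxe)))
  have hCt : C ⊆ e.target :=
    hCn.trans (e.image_source_eq_target ▸ image_mono inter_subset_right)
  refine ⟨e.source ∩ e ⁻¹' C,
    inter_mem (e.open_source.mem_nhds hxe) ((e.continuousAt hxe).preimage_mem_nhds hC), ?_, ?_⟩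
  · refine isClosed_of_closure_subset fun y hy => ?_
    have hyC : e y ∈ C :=
      closure_minimal inter_subset_right (hCc.preimage hf.continuous) hy
    -- Along the set, `id = e.symm ∘ e` tends to `e.symm (e y)` as well as to `y`.
    suffices hyz : y = e.symm (e y) from ⟨hyz ▸ e.map_target (hCt hyC), hyC⟩
    by_contra hne
    have hlim : Tendsto id (𝓝[e.source ∩ e ⁻¹' C] y) (𝓝 (e.symm (e y))) :=
      (((e.continuousAt_symm (hCt hyC)).comp hf.continuous.continuousAt).mono_left
        nhdsWithin_le_nhds).congr' (eventually_nhdsWithin_of_forall fun z hz => e.left_inv hz.1)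
    exact (mem_closure_iff_nhdsWithin_neBot.1 hy).ne ((isSeparatedMap_iff_disjoint_nhds.1 hsep y _
      (e.right_inv (hCt hyC)).symm hne).mono nhdsWithin_le_nhds hlim).eq_bot_of_self
  · rintro y ⟨hy, hyC⟩
    obtain ⟨z, ⟨hzn, hz⟩, hzy⟩ := hCn hyC
    exact e.injOn hz hy hzy ▸ hzn

theorem IsLocalHomeomorph.secondCountableTopology_of_injOn (hf : IsLocalHomeomorph f)
    [SecondCountableTopology Y] {s : Set X} (hs : IsOpen s) (hinj : InjOn f s) :
    SecondCountableTopology s :=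
  (IsOpenEmbedding.of_continuous_injective_isOpenMap (hf.continuous.comp continuous_subtype_val)
    hinj.injective (hf.isOpenMap.domRestrict hs)).isEmbedding.secondCountableTopology

end LocalHomeomorph

section PointCountableCover

variable {X ι : Type*} [TopologicalSpace X] {U : ι → Set X}

theorem countable_setOf_inter_nonempty_of_pointCountable (hU : ∀ i, IsOpen (U i))
    (hpt : ∀ x, {i | x ∈ U i}.Countable) {s : Set X} (hs : IsSeparable s) :
    {i | (U i ∩ s).Nonempty}.Countable := by
  obtain ⟨D, hDc, hsD⟩ := hs
  refine (hDc.biUnion fun x _ => hpt x).mono fun i hi => ?_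
  obtain ⟨x, hxD, hxi⟩ := (closure_inter_open_nonempty_iff (hU i)).1
    (hi.mono fun x hx => ⟨hsD hx.2, hx.1⟩)
  exact mem_biUnion hxD hxi

theorem exists_countable_subcover_of_countable_adjacent [PreconnectedSpace X]
    (hU : ∀ i, IsOpen (U i)) (hcover : ⋃ i, U i = univ)
    (hadj : ∀ i, {j | (U j ∩ U i).Nonempty}.Countable) :
    ∃ S : Set ι, S.Countable ∧ ⋃ i ∈ S, U i = univ := by
  rcases isEmpty_or_nonempty X with _ | ⟨⟨x₀⟩⟩
  · exact ⟨∅, countable_empty, Subsingleton.elim _ _⟩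
  obtain ⟨i₀, hi₀⟩ := mem_iUnion.1 (hcover ▸ mem_univ x₀)
  let step : Set ι → Set ι := fun S => ⋃ i ∈ S, {j | (U j ∩ U i).Nonempty}
  let S := ⋃ n, step^[n] {i₀}
  have hS : ∀ i ∈ S, ∀ j, (U j ∩ U i).Nonempty → j ∈ S := by
    intro i hi j hji
    obtain ⟨n, hn⟩ := mem_iUnion.1 hi
    exact mem_iUnion.2 ⟨n + 1, by rw [Function.iterate_succ_apply']; exact mem_biUnion hn hji⟩
  refine ⟨S, countable_iUnion fun n => ?_, ?_⟩
  · induction n with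
    | zero => exact countable_singleton i₀
    | succ n ih =>
      rw [Function.iterate_succ_apply']
      exact ih.biUnion fun i _ => hadj i
  have hcompl : (⋃ i ∈ S, U i)ᶜ = ⋃ j ∈ Sᶜ, U j := by
    refine Subset.antisymm (fun x hx => ?_) (iUnion₂_subset fun j hj x hxj hx => ?_)
    · obtain ⟨j, hxj⟩ := mem_iUnion.1 (hcover ▸ mem_univ x)
      exact mem_biUnion (fun hj => hx (mem_biUnion hj hxj)) hxj
    · obtain ⟨i, hi, hxi⟩ := mem_iUnion₂.1 hx
      exact hj (hS i hi j ⟨x, hxj, hxi⟩)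
  refine IsClopen.eq_univ ⟨?_, isOpen_biUnion fun i _ => hU i⟩
    ⟨x₀, mem_biUnion (mem_iUnion.2 ⟨0, rfl⟩) hi₀⟩
  rw [← isOpen_compl_iff, hcompl]
  exact isOpen_biUnion fun j _ => hU j

theorem secondCountableTopology_of_pointCountable_cover [PreconnectedSpace X]
    (hU : ∀ i, IsOpen (U i)) (hcover : ⋃ i, U i = univ) (hpt : ∀ x, {i | x ∈ U i}.Countable)
    [∀ i, SecondCountableTopology (U i)] : SecondCountableTopology X := by
  obtain ⟨S, hSc, hS⟩ := exists_countable_subcover_of_countable_adjacent hU hcover fun i =>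
    countable_setOf_inter_nonempty_of_pointCountable hU hpt (.of_subtype (U i))
  have := hSc.to_subtype
  exact secondCountableTopology_of_countable_cover (U := fun i : S => U i) (fun i => hU i)
    (by rwa [iUnion_subtype])

end PointCountableCover

namespace Bundle.Trivialization

variable {X Y F : Type*} [TopologicalSpace X] [TopologicalSpace Y] [TopologicalSpace F]
  {f : X → Y} (t : Trivialization F f)

def sheet (i : F) : Set X :=
  t.source ∩ (Prod.snd ∘ t) ⁻¹' {i}

theorem isOpen_sheet [DiscreteTopology F] (i : F) : IsOpen (t.sheet i) :=
  (continuous_snd.comp_continuousOn t.toOpenPartialHomeomorph.continuousOn).isOpen_inter_preimage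
    t.open_source (isOpen_discrete {i})

theorem injOn_sheet (i : F) : InjOn f (t.sheet i) := by
  rintro x ⟨hx, hxi⟩ y ⟨hy, hyi⟩ hxy
  refine t.injOn hx hy (?_ : t x = t y)
  rw [← t.mk_proj_snd hx, ← t.mk_proj_snd hy, hxy]
  exact congrArg _ (hxi.trans hyi.symm)

end Bundle.Trivialization

theorem IsCoveringMap.secondCountableTopology {X Y : Type*} [TopologicalSpace X]
    [TopologicalSpace Y] [PreconnectedSpace X] [SecondCountableTopology Y] {f : X → Y}
    (hf : IsCoveringMap f) : SecondCountableTopology X := by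
  have (x : X) : Nonempty (f ⁻¹' {f x}) := ⟨⟨x, rfl⟩⟩
  have (x : X) : DiscreteTopology (f ⁻¹' {f x}) := (hf (f x)).1
  let T (x : X) : Bundle.Trivialization (f ⁻¹' {f x}) f := (hf (f x)).toTrivialization
  obtain ⟨S, hSc, hS⟩ :=
    isOpen_iUnion_countable (fun x => (T x).baseSet) fun x => (T x).open_baseSet
  have := hSc.to_subtype
  let U (p : Σ x : S, f ⁻¹' {f x}) : Set X := (T p.1).sheet p.2
  have (p : Σ x : S, f ⁻¹' {f x}) : SecondCountableTopology (U p) :=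
    hf.isLocalHomeomorph.secondCountableTopology_of_injOn ((T p.1).isOpen_sheet p.2)
      ((T p.1).injOn_sheet p.2)
  refine secondCountableTopology_of_pointCountable_cover (U := U)
    (fun p => (T p.1).isOpen_sheet p.2) (eq_univ_of_forall fun y => ?_) fun y => ?_
  · obtain ⟨x, hxS, hyx⟩ := mem_iUnion₂.1 (hS ▸ mem_iUnion.2
      ⟨y, (hf (f y)).mem_toTrivialization_baseSet⟩ : f y ∈ ⋃ x ∈ S, (T x).baseSet)
    exact mem_iUnion.2 ⟨⟨⟨x, hxS⟩, (T x y).2⟩, (T x).mem_source.2 hyx, rfl⟩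
  · refine (countable_range fun x : S => (⟨x, (T x y).2⟩ : Σ x : S, f ⁻¹' {f x})).mono ?_
    rintro ⟨x, i⟩ ⟨-, hi⟩
    exact ⟨x, congrArg _ hi⟩

theorem coveringMap_lifts_locPathConnected_separable_metrizable_general
    {E' E : Type u} [TopologicalSpace E'] [TopologicalSpace E]
    [PathConnectedSpace E']
    (P : E' → E) (hP : IsCoveringMap P)
    [LocallyPathConnectedSpace E] [TopologicalSpace.SeparableSpace E]
    [TopologicalSpace.MetrizableSpace E] :
    LocallyPathConnectedSpace E' ∧ TopologicalSpace.SeparableSpace E' ∧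
      TopologicalSpace.MetrizableSpace E' := by
  have : SecondCountableTopology E := by
    let := metrizableSpaceMetric E
    exact UniformSpace.secondCountable_of_separable E
  have := hP.secondCountableTopology
  have := hP.isSeparatedMap.t2Space hP.continuous
  have := hP.isLocalHomeomorph.regularSpace hP.isSeparatedMap
  exact ⟨hP.isLocalHomeomorph.locallyPathConnectedSpace, inferInstance, inferInstance⟩

/-- **Proposition 5(e).**
Let `P : E' → E` be a covering projection between path connected spaces.  If `E` is locally
path connected, separable and metrizable, then `E'` is locally path connected, separable and
metrizable. -/
theorem coveringMap_lifts_locPathConnected_separable_metrizable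
    {E' E : Type u} [TopologicalSpace E'] [TopologicalSpace E]
    [PathConnectedSpace E'] [PathConnectedSpace E]
    (P : E' → E) (hP : IsCoveringMap P)
    [LocallyPathConnectedSpace E] [TopologicalSpace.SeparableSpace E]
    [TopologicalSpace.MetrizableSpace E] :
    LocallyPathConnectedSpace E' ∧ TopologicalSpace.SeparableSpace E' ∧
      TopologicalSpace.MetrizableSpace E' :=
  coveringMap_lifts_locPathConnected_separable_metrizable_general P hP
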